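/- (Lempert) Let n ≥ 1 and let ψ : ℂ^n → ℝ be C^∞ (as a function on ℝ^{2n}) and strongly convex. Then ψ̂ is real-valued and C^∞ on ℂ^n, and for every z ∈ ℂ^n and all v, t ∈ ℂ^n ≅ ℝ^{2n}: ω_{ψ̂}(g_ψ(z))(Dg_ψ(z)v, Dg_ψ(z)t) = ω_ψ(z)(v,t), where Dg_ψ(z) is the real Fréchet derivative of g_ψ at z. (In other words, g_ψ^*(i∂∂̄ψ̂) = i∂∂̄ψ.) -/

import Mathlib

open scoped ComplexConjugate

noncomputable section

/-- The real pairing 2·Re(Σ_j z_j·conj(w_j)) on ℂⁿ. -/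
def cpair {n : ℕ} (z w : EuclideanSpace ℂ (Fin n)) : ℝ :=
  2 * (∑ j, z j * conj (w j)).re

/-- The complex Legendre transform ψ̂(w) = sup_z [2·Re(Σ z_j conj(w_j)) − ψ(z)] ∈ ℝ ∪ {+∞}. -/
def cLeg {n : ℕ} (ψ : EuclideanSpace ℂ (Fin n) → ℝ) (w : EuclideanSpace ℂ (Fin n)) : EReal :=
  ⨆ z : EuclideanSpace ℂ (Fin n), ((cpair z w - ψ z : ℝ) : EReal)

/-- The j-th standard basis vector of ℂⁿ. -/
def ej {n : ℕ} (j : Fin n) : EuclideanSpace ℂ (Fin n) := EuclideanSpace.single j 1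

/-- Second real (Fréchet) derivative of f evaluated on a pair of directions. -/
def D2 {n : ℕ} (f : EuclideanSpace ℂ (Fin n) → ℝ) (z v w : EuclideanSpace ℂ (Fin n)) : ℝ :=
  fderiv ℝ (fderiv ℝ f) z v w

/-- The Wirtinger gradient map g_f(z)_j = (1/2)(∂_{x_j}f(z) + i·∂_{y_j}f(z)). -/
def wGrad {n : ℕ} (f : EuclideanSpace ℂ (Fin n) → ℝ) (z : EuclideanSpace ℂ (Fin n)) :
    EuclideanSpace ℂ (Fin n) :=
  WithLp.toLp 2 (fun j => (1 / 2 : ℂ) *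
    (↑(fderiv ℝ f z (ej j)) + Complex.I * ↑(fderiv ℝ f z (Complex.I • ej j))))

/-- The complex Hessian H_f(z)_{jk} = (∂²f/∂z_j∂z̄_k)(z)
= (1/4)[∂_{x_j}∂_{x_k}f + ∂_{y_j}∂_{y_k}f + i(∂_{x_j}∂_{y_k}f − ∂_{y_j}∂_{x_k}f)](z). -/
def cHess {n : ℕ} (f : EuclideanSpace ℂ (Fin n) → ℝ) (z : EuclideanSpace ℂ (Fin n))
    (j k : Fin n) : ℂ :=
  (1 / 4 : ℂ) *
    (↑(D2 f z (ej j) (ej k) + D2 f z (Complex.I • ej j) (Complex.I • ej k))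
      + Complex.I * ↑(D2 f z (ej j) (Complex.I • ej k) - D2 f z (Complex.I • ej j) (ej k)))

/-- The (1,1)-form ω_f(z)(v,t) = i·Σ_{j,k} H_f(z)_{jk}·(v_j·conj(t_k) − t_j·conj(v_k)). -/
def omegaF {n : ℕ} (f : EuclideanSpace ℂ (Fin n) → ℝ) (z v t : EuclideanSpace ℂ (Fin n)) : ℂ :=
  Complex.I * ∑ j, ∑ k, cHess f z j k * (v j * conj (t k) - t j * conj (v k))

namespace LempertAux

variable {n : ℕ}

/-- real pairing -/
def rpair (x y : EuclideanSpace ℂ (Fin n)) : ℝ := (∑ j, x j * conj (y j)).re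

lemma rpair_eq (x y : EuclideanSpace ℂ (Fin n)) :
    rpair x y = ∑ j, ((x j).re * (y j).re + (x j).im * (y j).im) := by
  simp only [rpair, Complex.re_sum]
  refine Finset.sum_congr rfl fun j _ => ?_
  simp [Complex.mul_re]

lemma rpair_comm (x y : EuclideanSpace ℂ (Fin n)) : rpair x y = rpair y x := by
  simp only [rpair_eq]
  exact Finset.sum_congr rfl fun j _ => by ring

lemma smul_I_apply (x : EuclideanSpace ℂ (Fin n)) (j : Fin n) :
    (Complex.I • x) j = Complex.I * x j := rfl

lemma real_smul_apply (r : ℝ) (x : EuclideanSpace ℂ (Fin n)) (j : Fin n) :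
    (r • x) j = (r : ℂ) * x j := by
  simp [PiLp.smul_apply, Complex.real_smul]

lemma rpair_smul_I_left (x y : EuclideanSpace ℂ (Fin n)) :
    rpair (Complex.I • x) y = - rpair x (Complex.I • y) := by
  simp only [rpair_eq, smul_I_apply, ← Finset.sum_neg_distrib]
  refine Finset.sum_congr rfl fun j _ => ?_
  simp [Complex.mul_re, Complex.mul_im]

lemma rpair_sub_left (x y u : EuclideanSpace ℂ (Fin n)) :
    rpair (x - y) u = rpair x u - rpair y u := by
  simp only [rpair_eq, ← Finset.sum_sub_distrib]
  refine Finset.sum_congr rfl fun j _ => ?_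
  have hx : (x - y) j = x j - y j := rfl
  simp [hx]
  ring

lemma rpair_smul_right (c : ℝ) (x u : EuclideanSpace ℂ (Fin n)) :
    rpair x (c • u) = c * rpair x u := by
  simp only [rpair_eq, real_smul_apply, Finset.mul_sum]
  refine Finset.sum_congr rfl fun j _ => ?_
  simp [Complex.mul_re, Complex.mul_im]
  ring

lemma rpair_self (x : EuclideanSpace ℂ (Fin n)) : rpair x x = ‖x‖ ^ 2 := by
  have h : ‖x‖ = Real.sqrt (∑ j, ‖x j‖ ^ 2) := by
    simpa using EuclideanSpace.norm_eq x
  rw [h, Real.sq_sqrt (Finset.sum_nonneg fun j _ => sq_nonneg _)]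
  rw [rpair_eq]
  refine Finset.sum_congr rfl fun j _ => ?_
  rw [show ‖x j‖ ^ 2 = Complex.normSq (x j) from by
    rw [Complex.normSq_eq_norm_sq], Complex.normSq_apply]

lemma rpair_le (x y : EuclideanSpace ℂ (Fin n)) : rpair x y ≤ ‖x‖ * ‖y‖ := by
  have h1 : rpair x y = (inner (𝕜 := ℂ) y x).re := by
    simp only [rpair, PiLp.inner_apply, RCLike.inner_apply, Complex.re_sum]
  rw [h1]
  calc (inner (𝕜 := ℂ) y x).re ≤ |(inner (𝕜 := ℂ) y x).re| := le_abs_self _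
    _ ≤ ‖inner (𝕜 := ℂ) y x‖ := Complex.abs_re_le_norm _
    _ ≤ ‖y‖ * ‖x‖ := by
        simpa using norm_inner_le_norm (𝕜 := ℂ) y x
    _ = ‖x‖ * ‖y‖ := mul_comm _ _

lemma rpair_eq_of_forall {x y : EuclideanSpace ℂ (Fin n)}
    (h : ∀ u, rpair x u = rpair y u) : x = y := by
  have h2 : rpair (x - y) (x - y) = 0 := by
    rw [rpair_sub_left, h (x - y), rpair_comm, rpair_sub_left]
    ring
  have h3 := rpair_self (x - y)
  rw [h2] at h3
  have h4 : ‖x - y‖ = 0 := by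
    have := sq_eq_zero_iff.mp h3.symm
    exact this
  have h5 : x - y = 0 := norm_eq_zero.mp h4
  exact sub_eq_zero.mp h5

lemma ej_apply (j k : Fin n) : ej j k = if k = j then 1 else 0 := by
  simp [ej, EuclideanSpace.single_apply]

lemma euclidean_decomp (v : EuclideanSpace ℂ (Fin n)) :
    v = ∑ j, ((v j).re • ej j + (v j).im • (Complex.I • ej j)) := by
  ext k
  have happ : (∑ j, ((v j).re • ej j + (v j).im • (Complex.I • ej j))) k
      = ∑ j, (((v j).re • ej j) k + ((v j).im • (Complex.I • ej j)) k) := by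
    simp only [WithLp.ofLp_sum, WithLp.ofLp_add, Finset.sum_apply, Pi.add_apply]
  rw [happ]
  have : ∀ j, (((v j).re • ej j) k + ((v j).im • (Complex.I • ej j)) k)
      = if k = j then ((v j).re + (v j).im * Complex.I) else 0 := by
    intro j
    rw [real_smul_apply, real_smul_apply, smul_I_apply, ej_apply]
    by_cases h : k = j <;> simp [h] <;> ring
  rw [Finset.sum_congr rfl fun j _ => this j, Finset.sum_ite_eq Finset.univ k
    (fun j => ((v j).re + (v j).im * Complex.I))]
  rw [if_pos (Finset.mem_univ k)]
  exact (Complex.re_add_im (v k)).symm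

lemma clm_apply_decomp {F : Type*} [NormedAddCommGroup F] [NormedSpace ℝ F]
    (L : EuclideanSpace ℂ (Fin n) →L[ℝ] F) (v : EuclideanSpace ℂ (Fin n)) :
    L v = ∑ j, ((v j).re • L (ej j) + (v j).im • L (Complex.I • ej j)) := by
  conv_lhs => rw [euclidean_decomp v]
  rw [map_sum]
  exact Finset.sum_congr rfl fun j _ => by rw [map_add, map_smul, map_smul]

/-- The linear map sending a real functional to its "Wirtinger vector". -/
def Tlin : (EuclideanSpace ℂ (Fin n) →L[ℝ] ℝ) →ₗ[ℝ] EuclideanSpace ℂ (Fin n) where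
  toFun L := WithLp.toLp 2 (fun j => (1 / 2 : ℂ) *
    (↑(L (ej j)) + Complex.I * ↑(L (Complex.I • ej j))))
  map_add' L M := by
    ext j
    show (1/2 : ℂ) * _ = (1/2 : ℂ) * _ + (1/2 : ℂ) * _
    simp only [ContinuousLinearMap.add_apply, Complex.ofReal_add]
    ring
  map_smul' c L := by
    ext j
    show (1/2 : ℂ) * _ = (c : ℂ) * ((1/2 : ℂ) * _)
    simp only [ContinuousLinearMap.coe_smul', Pi.smul_apply, smul_eq_mul, Complex.ofReal_mul]
    ring

def Tmap : (EuclideanSpace ℂ (Fin n) →L[ℝ] ℝ) →L[ℝ] EuclideanSpace ℂ (Fin n) :=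
  LinearMap.toContinuousLinearMap Tlin

lemma Tmap_apply (L : EuclideanSpace ℂ (Fin n) →L[ℝ] ℝ) (j : Fin n) :
    Tmap L j = (1 / 2 : ℂ) * (↑(L (ej j)) + Complex.I * ↑(L (Complex.I • ej j))) := rfl

lemma wGrad_eq (f : EuclideanSpace ℂ (Fin n) → ℝ) (z : EuclideanSpace ℂ (Fin n)) :
    wGrad f z = Tmap (fderiv ℝ f z) := rfl

lemma rpair_Tmap (L : EuclideanSpace ℂ (Fin n) →L[ℝ] ℝ) (w : EuclideanSpace ℂ (Fin n)) :
    rpair (Tmap L) w = (1 / 2) * L w := by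
  rw [clm_apply_decomp L w, rpair_eq]
  rw [Finset.mul_sum]
  refine Finset.sum_congr rfl fun j _ => ?_
  have h1 : (Tmap L j).re = (1 / 2) * L (ej j) := by
    rw [Tmap_apply]
    simp [Complex.mul_re]
  have h2 : (Tmap L j).im = (1 / 2) * L (Complex.I • ej j) := by
    rw [Tmap_apply]
    simp [Complex.mul_im]
  rw [h1, h2]
  simp [smul_eq_mul]
  ring

lemma contDiff_fderiv {f : EuclideanSpace ℂ (Fin n) → ℝ} (hf : ContDiff ℝ (⊤ : ℕ∞) f) :
    ContDiff ℝ (⊤ : ℕ∞) (fderiv ℝ f) :=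
  hf.fderiv_right (le_of_eq (by rw [← WithTop.coe_one, ← WithTop.coe_add, top_add]))

lemma wGrad_eq_comp (f : EuclideanSpace ℂ (Fin n) → ℝ) :
    wGrad f = fun z => Tmap (fderiv ℝ f z) := rfl

lemma contDiff_wGrad {f : EuclideanSpace ℂ (Fin n) → ℝ} (hf : ContDiff ℝ (⊤ : ℕ∞) f) :
    ContDiff ℝ (⊤ : ℕ∞) (wGrad f) := by
  rw [wGrad_eq_comp]
  exact Tmap.contDiff.comp (contDiff_fderiv hf)

lemma fderiv_wGrad {f : EuclideanSpace ℂ (Fin n) → ℝ} (hf : ContDiff ℝ (⊤ : ℕ∞) f)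
    (z : EuclideanSpace ℂ (Fin n)) :
    fderiv ℝ (wGrad f) z = Tmap.comp (fderiv ℝ (fderiv ℝ f) z) := by
  have h1 : HasFDerivAt (fderiv ℝ f) (fderiv ℝ (fderiv ℝ f) z) z :=
    ((contDiff_fderiv hf).differentiable (by simp) z).hasFDerivAt
  have h2 : HasFDerivAt (wGrad f) (Tmap.comp (fderiv ℝ (fderiv ℝ f) z)) z := by
    rw [wGrad_eq_comp]
    exact (Tmap.hasFDerivAt).comp z h1
  exact h2.fderiv

lemma rpair_fderiv_wGrad {f : EuclideanSpace ℂ (Fin n) → ℝ} (hf : ContDiff ℝ (⊤ : ℕ∞) f)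
    (z v w : EuclideanSpace ℂ (Fin n)) :
    rpair (fderiv ℝ (wGrad f) z v) w = (1 / 2) * D2 f z v w := by
  rw [fderiv_wGrad hf, ContinuousLinearMap.comp_apply, rpair_Tmap]
  rfl

lemma fderiv_eq_rpair (f : EuclideanSpace ℂ (Fin n) → ℝ) (z w : EuclideanSpace ℂ (Fin n)) :
    fderiv ℝ f z w = 2 * rpair (wGrad f z) w := by
  rw [wGrad_eq, rpair_Tmap]
  ring

lemma D2_expand (f : EuclideanSpace ℂ (Fin n) → ℝ) (z X Y : EuclideanSpace ℂ (Fin n)) :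
    D2 f z X Y = ∑ j, ∑ k,
      ((X j).re * (Y k).re * D2 f z (ej j) (ej k)
       + (X j).re * (Y k).im * D2 f z (ej j) (Complex.I • ej k)
       + (X j).im * (Y k).re * D2 f z (Complex.I • ej j) (ej k)
       + (X j).im * (Y k).im * D2 f z (Complex.I • ej j) (Complex.I • ej k)) := by
  simp only [D2]
  set M := fderiv ℝ (fderiv ℝ f) z with hM
  rw [show M X = ∑ j, ((X j).re • M (ej j) + (X j).im • M (Complex.I • ej j)) from
    clm_apply_decomp M X]
  rw [ContinuousLinearMap.sum_apply]
  refine Finset.sum_congr rfl fun j _ => ?_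
  rw [ContinuousLinearMap.add_apply, ContinuousLinearMap.smul_apply,
    ContinuousLinearMap.smul_apply]
  rw [clm_apply_decomp (M (ej j)) Y, clm_apply_decomp (M (Complex.I • ej j)) Y]
  rw [smul_eq_mul, smul_eq_mul, Finset.mul_sum, Finset.mul_sum, ← Finset.sum_add_distrib]
  refine Finset.sum_congr rfl fun k _ => ?_
  simp only [smul_eq_mul]
  ring

lemma key_alg (vj vk tj tk : ℂ) (p q r s : ℝ) :
    Complex.I * ((1 / 4 : ℂ) * (↑(p + s) + Complex.I * ↑(q - r)))
        * (vj * conj tk - tj * conj vk)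
      + Complex.I * ((1 / 4 : ℂ) * (↑(p + s) + Complex.I * ↑(r - q)))
        * (vk * conj tj - tk * conj vj)
    = (((1 / 2 : ℝ) * ((-vj.im * tk.re * p + -vj.im * tk.im * q
          + vj.re * tk.re * r + vj.re * tk.im * s)
        - (-tj.im * vk.re * p + -tj.im * vk.im * q
          + tj.re * vk.re * r + tj.re * vk.im * s)) : ℝ) : ℂ)
      + (((1 / 2 : ℝ) * ((-vk.im * tj.re * p + -vk.im * tj.im * r
          + vk.re * tj.re * q + vk.re * tj.im * s)
        - (-tk.im * vj.re * p + -tk.im * vj.im * r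
          + tk.re * vj.re * q + tk.re * vj.im * s)) : ℝ) : ℂ) := by
  rw [show (1 / 4 : ℂ) = ((1 / 4 : ℝ) : ℂ) by norm_num]
  apply Complex.ext <;>
    simp only [Complex.add_re, Complex.add_im, Complex.mul_re, Complex.mul_im,
      Complex.I_re, Complex.I_im, Complex.ofReal_re, Complex.ofReal_im,
      Complex.sub_re, Complex.sub_im, Complex.conj_re, Complex.conj_im] <;>
    ring

lemma omega_rep (f : EuclideanSpace ℂ (Fin n) → ℝ) (z : EuclideanSpace ℂ (Fin n))
    (hsymm : ∀ v w, D2 f z v w = D2 f z w v) (v t : EuclideanSpace ℂ (Fin n)) :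
    omegaF f z v t
      = (((1 / 2 : ℝ) * (D2 f z (Complex.I • v) t - D2 f z (Complex.I • t) v) : ℝ) : ℂ) := by
  have hIre : ∀ (x : EuclideanSpace ℂ (Fin n)) (j : Fin n),
      ((Complex.I • x) j).re = -(x j).im := by
    intro x j; rw [smul_I_apply]; simp
  have hIim : ∀ (x : EuclideanSpace ℂ (Fin n)) (j : Fin n),
      ((Complex.I • x) j).im = (x j).re := by
    intro x j; rw [smul_I_apply]; simp
  set F : Fin n → Fin n → ℂ := fun j k =>
    Complex.I * cHess f z j k * (v j * conj (t k) - t j * conj (v k)) with hF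
  set g : Fin n → Fin n → ℝ := fun j k =>
    (1 / 2 : ℝ) * ((-(v j).im * (t k).re * D2 f z (ej j) (ej k)
        + -(v j).im * (t k).im * D2 f z (ej j) (Complex.I • ej k)
        + (v j).re * (t k).re * D2 f z (Complex.I • ej j) (ej k)
        + (v j).re * (t k).im * D2 f z (Complex.I • ej j) (Complex.I • ej k))
      - (-(t j).im * (v k).re * D2 f z (ej j) (ej k)
        + -(t j).im * (v k).im * D2 f z (ej j) (Complex.I • ej k)
        + (t j).re * (v k).re * D2 f z (Complex.I • ej j) (ej k)
        + (t j).re * (v k).im * D2 f z (Complex.I • ej j) (Complex.I • ej k))) with hg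
  have hL : omegaF f z v t = ∑ j, ∑ k, F j k := by
    rw [omegaF, Finset.mul_sum]
    refine Finset.sum_congr rfl fun j _ => ?_
    rw [Finset.mul_sum]
    exact Finset.sum_congr rfl fun k _ => (mul_assoc _ _ _).symm
  have hR0 : (1 / 2 : ℝ) * (D2 f z (Complex.I • v) t - D2 f z (Complex.I • t) v)
      = ∑ j, ∑ k, g j k := by
    rw [D2_expand f z (Complex.I • v) t, D2_expand f z (Complex.I • t) v,
      ← Finset.sum_sub_distrib, Finset.mul_sum]
    refine Finset.sum_congr rfl fun j _ => ?_
    rw [← Finset.sum_sub_distrib, Finset.mul_sum]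
    refine Finset.sum_congr rfl fun k _ => ?_
    rw [hg]
    simp only [hIre, hIim]
  have hkey : ∀ j k, F j k + F k j = ((g j k : ℝ) : ℂ) + ((g k j : ℝ) : ℂ) := by
    intro j k
    rw [hF, hg]
    simp only [cHess]
    rw [show D2 f z (ej k) (ej j) = D2 f z (ej j) (ej k) from hsymm _ _,
      show D2 f z (ej k) (Complex.I • ej j) = D2 f z (Complex.I • ej j) (ej k) from hsymm _ _,
      show D2 f z (Complex.I • ej k) (ej j) = D2 f z (ej j) (Complex.I • ej k) from hsymm _ _,
      show D2 f z (Complex.I • ej k) (Complex.I • ej j)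
          = D2 f z (Complex.I • ej j) (Complex.I • ej k) from hsymm _ _]
    exact key_alg (v j) (v k) (t j) (t k) _ _ _ _
  have hdouble : ∀ (H : Fin n → Fin n → ℂ),
      (∑ j, ∑ k, (H j k + H k j)) = 2 * ∑ j, ∑ k, H j k := by
    intro H
    simp only [Finset.sum_add_distrib]
    rw [two_mul]
    congr 1
    exact Finset.sum_comm
  have h2 : (∑ j, ∑ k, (F j k + F k j))
      = ∑ j, ∑ k, (((g j k : ℝ) : ℂ) + ((g k j : ℝ) : ℂ)) :=
    Finset.sum_congr rfl fun j _ => Finset.sum_congr rfl fun k _ => hkey j k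
  rw [hdouble F, hdouble (fun j k => ((g j k : ℝ) : ℂ))] at h2
  have h3 : (∑ j, ∑ k, F j k) = ∑ j, ∑ k, ((g j k : ℝ) : ℂ) :=
    mul_left_cancel₀ two_ne_zero h2
  rw [hL, h3, hR0]
  push_cast
  rfl

def rpairLin (u : EuclideanSpace ℂ (Fin n)) : EuclideanSpace ℂ (Fin n) →ₗ[ℝ] ℝ where
  toFun x := rpair x u
  map_add' x y := by
    simp only [rpair_eq, ← Finset.sum_add_distrib]
    refine Finset.sum_congr rfl fun j _ => ?_
    have hx : (x + y) j = x j + y j := rfl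
    simp [hx]
    ring
  map_smul' c x := by
    simp only [rpair_eq, RingHom.id_apply, smul_eq_mul, Finset.mul_sum]
    refine Finset.sum_congr rfl fun j _ => ?_
    rw [real_smul_apply]
    simp [Complex.mul_re, Complex.mul_im]
    ring

def rpairCLM (u : EuclideanSpace ℂ (Fin n)) : EuclideanSpace ℂ (Fin n) →L[ℝ] ℝ :=
  LinearMap.toContinuousLinearMap (rpairLin u)

section Mono
variable {ψ : EuclideanSpace ℂ (Fin n) → ℝ} {δ : ℝ}

lemma mono (hsm : ContDiff ℝ (⊤ : ℕ∞) ψ)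
    (hconv : ∀ z v, δ * ‖v‖ ^ 2 ≤ fderiv ℝ (fderiv ℝ ψ) z v v) (z₁ z₂ : EuclideanSpace ℂ (Fin n)) :
    δ / 2 * ‖z₁ - z₂‖ ^ 2 ≤ rpair (wGrad ψ z₁ - wGrad ψ z₂) (z₁ - z₂) := by
  set u := z₁ - z₂ with hu
  set φ : ℝ → ℝ := fun s => rpair (wGrad ψ (z₂ + s • u)) u with hφ
  set φ' : ℝ → ℝ := fun s => rpair (fderiv ℝ (wGrad ψ) (z₂ + s • u) u) u with hφ'
  have hder : ∀ s : ℝ, HasDerivAt φ (φ' s) s := by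
    intro s
    have hγ : HasDerivAt (fun s : ℝ => z₂ + s • u) u s := by
      simpa using ((hasDerivAt_id s).smul_const u).const_add z₂
    have hg : HasFDerivAt (wGrad ψ) (fderiv ℝ (wGrad ψ) (z₂ + s • u)) (z₂ + s • u) :=
      ((contDiff_wGrad hsm).differentiable (by simp) _).hasFDerivAt
    have h1 : HasDerivAt (fun s : ℝ => wGrad ψ (z₂ + s • u))
        (fderiv ℝ (wGrad ψ) (z₂ + s • u) u) s := by have := hg.comp_hasDerivAt s hγ; exact this
    have h2 := (rpairCLM u).hasFDerivAt.comp_hasDerivAt s h1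
    exact h2
  have hlow : ∀ s : ℝ, δ / 2 * ‖u‖ ^ 2 ≤ φ' s := by
    intro s
    have hr := rpair_fderiv_wGrad hsm (z₂ + s • u) u u
    show δ / 2 * ‖u‖ ^ 2 ≤ rpair ((fderiv ℝ (wGrad ψ) (z₂ + s • u)) u) u
    rw [hr]
    have := hconv (z₂ + s • u) u
    have hD : D2 ψ (z₂ + s • u) u u = fderiv ℝ (fderiv ℝ ψ) (z₂ + s • u) u u := rfl
    rw [hD]
    linarith
  obtain ⟨c, _, heq⟩ := exists_hasDerivAt_eq_slope φ φ' (by norm_num : (0:ℝ) < 1)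
    (fun x _ => (hder x).continuousAt.continuousWithinAt) (fun x _ => hder x)
  have h0 : φ 0 = rpair (wGrad ψ z₂) u := by simp [hφ]
  have h1 : φ 1 = rpair (wGrad ψ z₁) u := by
    rw [hφ]
    norm_num [hu]
  have hsub : rpair (wGrad ψ z₁ - wGrad ψ z₂) u = φ 1 - φ 0 := by
    rw [rpair_sub_left, h0, h1]
  rw [hsub]
  have : φ 1 - φ 0 = φ' c := by rw [heq]; ring
  rw [this]
  exact hlow c

lemma expansive (hsm : ContDiff ℝ (⊤ : ℕ∞) ψ) (hδ : 0 < δ)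
    (hconv : ∀ z v, δ * ‖v‖ ^ 2 ≤ fderiv ℝ (fderiv ℝ ψ) z v v) (z₁ z₂ : EuclideanSpace ℂ (Fin n)) :
    ‖z₁ - z₂‖ ≤ (2 / δ) * ‖wGrad ψ z₁ - wGrad ψ z₂‖ := by
  rcases eq_or_ne z₁ z₂ with h | h
  · rw [h]
    simp
  have hu : 0 < ‖z₁ - z₂‖ := by
    rw [norm_pos_iff, sub_ne_zero]
    exact h
  have h1 := mono hsm hconv z₁ z₂
  have h2 := rpair_le (wGrad ψ z₁ - wGrad ψ z₂) (z₁ - z₂)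
  have h3 : δ / 2 * ‖z₁ - z₂‖ ^ 2 ≤ ‖wGrad ψ z₁ - wGrad ψ z₂‖ * ‖z₁ - z₂‖ := le_trans h1 h2
  rw [div_mul_eq_mul_div, le_div_iff₀ hδ]
  nlinarith

lemma wGrad_injective (hsm : ContDiff ℝ (⊤ : ℕ∞) ψ) (hδ : 0 < δ)
    (hconv : ∀ z v, δ * ‖v‖ ^ 2 ≤ fderiv ℝ (fderiv ℝ ψ) z v v) :
    Function.Injective (wGrad ψ) := by
  intro z₁ z₂ h
  have h2 := expansive hsm hδ hconv z₁ z₂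
  rw [h] at h2
  simp only [sub_self, norm_zero, mul_zero] at h2
  have h3 : ‖z₁ - z₂‖ = 0 := le_antisymm h2 (norm_nonneg _)
  rw [norm_eq_zero, sub_eq_zero] at h3
  exact h3

end Mono

section Surj
variable {ψ : EuclideanSpace ℂ (Fin n) → ℝ} {δ : ℝ}

lemma rpair_zero_left (x : EuclideanSpace ℂ (Fin n)) : rpair 0 x = 0 := by
  simp [rpair_eq, show ∀ j, (0 : EuclideanSpace ℂ (Fin n)) j = 0 from fun j => rfl]

lemma deriv_ker (hsm : ContDiff ℝ (⊤ : ℕ∞) ψ) (hδ : 0 < δ)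
    (hconv : ∀ z v, δ * ‖v‖ ^ 2 ≤ fderiv ℝ (fderiv ℝ ψ) z v v)
    (z x : EuclideanSpace ℂ (Fin n)) (hx : fderiv ℝ (wGrad ψ) z x = 0) : x = 0 := by
  have h1 := rpair_fderiv_wGrad hsm z x x
  rw [hx, rpair_zero_left] at h1
  have h2 := hconv z x
  have hD : D2 ψ z x x = fderiv ℝ (fderiv ℝ ψ) z x x := rfl
  rw [← hD] at h2
  have h3 : ‖x‖ ^ 2 ≤ 0 := by nlinarith
  have h4 : ‖x‖ = 0 := by nlinarith [norm_nonneg x, sq_nonneg ‖x‖]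
  exact norm_eq_zero.mp h4

lemma deriv_injective (hsm : ContDiff ℝ (⊤ : ℕ∞) ψ) (hδ : 0 < δ)
    (hconv : ∀ z v, δ * ‖v‖ ^ 2 ≤ fderiv ℝ (fderiv ℝ ψ) z v v)
    (z : EuclideanSpace ℂ (Fin n)) : Function.Injective (fderiv ℝ (wGrad ψ) z) := by
  intro v w h
  have : fderiv ℝ (wGrad ψ) z (v - w) = 0 := by rw [map_sub, h, sub_self]
  have := deriv_ker hsm hδ hconv z _ this
  exact sub_eq_zero.mp this

/-- derivative of `wGrad ψ` as a linear equivalence -/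
def derivEquiv (hsm : ContDiff ℝ (⊤ : ℕ∞) ψ) (hδ : 0 < δ)
    (hconv : ∀ z v, δ * ‖v‖ ^ 2 ≤ fderiv ℝ (fderiv ℝ ψ) z v v)
    (z : EuclideanSpace ℂ (Fin n)) :
    EuclideanSpace ℂ (Fin n) ≃L[ℝ] EuclideanSpace ℂ (Fin n) :=
  LinearEquiv.toContinuousLinearEquiv
    (LinearEquiv.ofBijective ((fderiv ℝ (wGrad ψ) z) : _ →ₗ[ℝ] _)
      ⟨deriv_injective hsm hδ hconv z,
       (LinearMap.injective_iff_surjective).mp (deriv_injective hsm hδ hconv z)⟩)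

lemma derivEquiv_coe (hsm : ContDiff ℝ (⊤ : ℕ∞) ψ) (hδ : 0 < δ)
    (hconv : ∀ z v, δ * ‖v‖ ^ 2 ≤ fderiv ℝ (fderiv ℝ ψ) z v v)
    (z : EuclideanSpace ℂ (Fin n)) :
    ((derivEquiv hsm hδ hconv z : EuclideanSpace ℂ (Fin n) ≃L[ℝ] EuclideanSpace ℂ (Fin n)) :
      EuclideanSpace ℂ (Fin n) →L[ℝ] EuclideanSpace ℂ (Fin n)) = fderiv ℝ (wGrad ψ) z := by
  ext x
  rfl

lemma wGrad_hasStrict (hsm : ContDiff ℝ (⊤ : ℕ∞) ψ) (z : EuclideanSpace ℂ (Fin n)) :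
    HasStrictFDerivAt (wGrad ψ) (fderiv ℝ (wGrad ψ) z) z :=
  (contDiff_wGrad hsm).contDiffAt.hasStrictFDerivAt (by simp)

lemma range_open (hsm : ContDiff ℝ (⊤ : ℕ∞) ψ) (hδ : 0 < δ)
    (hconv : ∀ z v, δ * ‖v‖ ^ 2 ≤ fderiv ℝ (fderiv ℝ ψ) z v v) :
    IsOpen (Set.range (wGrad ψ)) := by
  rw [isOpen_iff_mem_nhds]
  rintro w ⟨z, rfl⟩
  have hstrict : HasStrictFDerivAt (wGrad ψ)
      ((derivEquiv hsm hδ hconv z : EuclideanSpace ℂ (Fin n) ≃L[ℝ] EuclideanSpace ℂ (Fin n)) :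
        EuclideanSpace ℂ (Fin n) →L[ℝ] EuclideanSpace ℂ (Fin n)) z := by
    rw [derivEquiv_coe]
    exact wGrad_hasStrict hsm z
  have hmap := hstrict.map_nhds_eq_of_equiv
  rw [← hmap, Filter.mem_map]
  exact Filter.univ_mem' (fun x => ⟨x, rfl⟩)

lemma range_closed (hsm : ContDiff ℝ (⊤ : ℕ∞) ψ) (hδ : 0 < δ)
    (hconv : ∀ z v, δ * ‖v‖ ^ 2 ≤ fderiv ℝ (fderiv ℝ ψ) z v v) :
    IsClosed (Set.range (wGrad ψ)) := by
  apply IsSeqClosed.isClosed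
  intro x w hx hlim
  choose z hz using hx
  have hxz : (fun k => wGrad ψ (z k)) = x := funext hz
  have hc : CauchySeq x := hlim.cauchySeq
  have hzc : CauchySeq z := by
    rw [Metric.cauchySeq_iff] at hc ⊢
    intro ε hε
    obtain ⟨N, hN⟩ := hc (ε * δ / 2) (by positivity)
    refine ⟨N, fun m hm k hk => ?_⟩
    have h1 := expansive hsm hδ hconv (z m) (z k)
    have h2 := hN m hm k hk
    rw [dist_eq_norm] at h2 ⊢
    rw [← hz m, ← hz k] at h2
    calc ‖z m - z k‖ ≤ (2 / δ) * ‖wGrad ψ (z m) - wGrad ψ (z k)‖ := h1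
      _ < (2 / δ) * (ε * δ / 2) := by
          apply mul_lt_mul_of_pos_left h2
          positivity
      _ = ε := by field_simp
  obtain ⟨zl, hzl⟩ := cauchySeq_tendsto_of_complete hzc
  refine ⟨zl, ?_⟩
  have h1 : Filter.Tendsto (fun k => wGrad ψ (z k)) Filter.atTop (nhds (wGrad ψ zl)) :=
    ((contDiff_wGrad hsm).continuous.tendsto zl).comp hzl
  rw [hxz] at h1
  exact tendsto_nhds_unique h1 hlim

lemma wGrad_surjective (hsm : ContDiff ℝ (⊤ : ℕ∞) ψ) (hδ : 0 < δ)
    (hconv : ∀ z v, δ * ‖v‖ ^ 2 ≤ fderiv ℝ (fderiv ℝ ψ) z v v) :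
    Function.Surjective (wGrad ψ) := by
  have hclopen : IsClopen (Set.range (wGrad ψ)) :=
    ⟨range_closed hsm hδ hconv, range_open hsm hδ hconv⟩
  have huniv : Set.range (wGrad ψ) = Set.univ :=
    hclopen.eq_univ ⟨wGrad ψ 0, 0, rfl⟩
  intro w
  have : w ∈ Set.range (wGrad ψ) := huniv ▸ Set.mem_univ w
  exact this

end Surj

section Inv
variable {ψ : EuclideanSpace ℂ (Fin n) → ℝ} {δ : ℝ}

/-- global inverse of the Wirtinger gradient map -/
def Ginv (ψ : EuclideanSpace ℂ (Fin n) → ℝ) : EuclideanSpace ℂ (Fin n) → EuclideanSpace ℂ (Fin n) :=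
  Function.invFun (wGrad ψ)

lemma Ginv_left (hsm : ContDiff ℝ (⊤ : ℕ∞) ψ) (hδ : 0 < δ)
    (hconv : ∀ z v, δ * ‖v‖ ^ 2 ≤ fderiv ℝ (fderiv ℝ ψ) z v v)
    (z : EuclideanSpace ℂ (Fin n)) : Ginv ψ (wGrad ψ z) = z :=
  Function.leftInverse_invFun (wGrad_injective hsm hδ hconv) z

lemma Ginv_right (hsm : ContDiff ℝ (⊤ : ℕ∞) ψ) (hδ : 0 < δ)
    (hconv : ∀ z v, δ * ‖v‖ ^ 2 ≤ fderiv ℝ (fderiv ℝ ψ) z v v)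
    (w : EuclideanSpace ℂ (Fin n)) : wGrad ψ (Ginv ψ w) = w :=
  Function.rightInverse_invFun (wGrad_surjective hsm hδ hconv) w

lemma Ginv_contDiff (hsm : ContDiff ℝ (⊤ : ℕ∞) ψ) (hδ : 0 < δ)
    (hconv : ∀ z v, δ * ‖v‖ ^ 2 ≤ fderiv ℝ (fderiv ℝ ψ) z v v) :
    ContDiff ℝ (⊤ : ℕ∞) (Ginv ψ) := by
  rw [contDiff_iff_contDiffAt]
  intro w
  obtain ⟨z, rfl⟩ := wGrad_surjective hsm hδ hconv w
  have hcd : ContDiffAt ℝ (⊤ : ℕ∞) (wGrad ψ) z := (contDiff_wGrad hsm).contDiffAt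
  have hf' : HasFDerivAt (wGrad ψ)
      ((derivEquiv hsm hδ hconv z :
        EuclideanSpace ℂ (Fin n) ≃L[ℝ] EuclideanSpace ℂ (Fin n)) :
        EuclideanSpace ℂ (Fin n) →L[ℝ] EuclideanSpace ℂ (Fin n)) z := by
    rw [derivEquiv_coe]
    exact (wGrad_hasStrict hsm z).hasFDerivAt
  have hloc := hcd.to_localInverse (f' := derivEquiv hsm hδ hconv z) hf' (by simp)
  apply hloc.congr_of_eventuallyEq
  have hev := (hcd.hasStrictFDerivAt' hf' (by simp)).eventually_right_inverse
  filter_upwards [hev] with y hy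
  apply wGrad_injective hsm hδ hconv
  rw [Ginv_right hsm hδ hconv]
  exact hy.symm

end Inv

section Leg
variable {ψ : EuclideanSpace ℂ (Fin n) → ℝ} {δ : ℝ}

lemma cpair_eq_rpair (z w : EuclideanSpace ℂ (Fin n)) : cpair z w = 2 * rpair z w := rfl

lemma rpair_eq_inner (x y : EuclideanSpace ℂ (Fin n)) :
    rpair x y = (inner (𝕜 := ℂ) y x).re := by
  simp only [rpair, PiLp.inner_apply, RCLike.inner_apply, Complex.re_sum]

lemma legendre_le (hsm : ContDiff ℝ (⊤ : ℕ∞) ψ) (hδ : 0 < δ)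
    (hconv : ∀ z v, δ * ‖v‖ ^ 2 ≤ fderiv ℝ (fderiv ℝ ψ) z v v)
    (w z : EuclideanSpace ℂ (Fin n)) :
    cpair z w - ψ z ≤ cpair (Ginv ψ w) w - ψ (Ginv ψ w) := by
  set z₀ := Ginv ψ w with hz₀
  rcases eq_or_ne z z₀ with h | h
  · rw [h]
  set u := z - z₀ with hu
  set φ : ℝ → ℝ := fun s => cpair (z₀ + s • u) w - ψ (z₀ + s • u) with hφ
  set φ' : ℝ → ℝ := fun s => cpair u w - fderiv ℝ ψ (z₀ + s • u) u with hφ'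
  have hγ : ∀ s : ℝ, HasDerivAt (fun s : ℝ => z₀ + s • u) u s := by
    intro s
    simpa using ((hasDerivAt_id s).smul_const u).const_add z₀
  have hder : ∀ s : ℝ, HasDerivAt φ (φ' s) s := by
    intro s
    have h1 : HasDerivAt (fun s : ℝ => rpair (z₀ + s • u) w) (rpair u w) s := by
      have := (rpairCLM w).hasFDerivAt.comp_hasDerivAt s (hγ s)
      exact this
    have h2 : HasDerivAt (fun s : ℝ => cpair (z₀ + s • u) w) (2 * rpair u w) s := by
      simp only [cpair_eq_rpair]
      exact h1.const_mul 2
    have h3 : HasDerivAt (fun s : ℝ => ψ (z₀ + s • u)) (fderiv ℝ ψ (z₀ + s • u) u) s :=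
      ((hsm.differentiable (by simp) _).hasFDerivAt).comp_hasDerivAt s (hγ s)
    have h4 := h2.sub h3
    have he : (2 : ℝ) * rpair u w - fderiv ℝ ψ (z₀ + s • u) u = φ' s := by
      rw [hφ', cpair_eq_rpair]
    rw [← he]
    exact h4
  have hneg : ∀ s : ℝ, 0 < s → φ' s ≤ 0 := by
    intro s hs
    have hmono := mono hsm hconv (z₀ + s • u) z₀
    have hdiff : z₀ + s • u - z₀ = s • u := by abel
    rw [hdiff] at hmono
    have hsum : rpair (wGrad ψ (z₀ + s • u) - wGrad ψ z₀) (s • u)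
        = s * rpair (wGrad ψ (z₀ + s • u) - wGrad ψ z₀) u := rpair_smul_right s _ u
    rw [hsum] at hmono
    have hpos : 0 ≤ δ / 2 * ‖s • u‖ ^ 2 := by positivity
    have h5 : 0 ≤ rpair (wGrad ψ (z₀ + s • u) - wGrad ψ z₀) u := by
      nlinarith
    have h6 : φ' s = -2 * rpair (wGrad ψ (z₀ + s • u) - wGrad ψ z₀) u := by
      show cpair u w - fderiv ℝ ψ (z₀ + s • u) u = _
      rw [fderiv_eq_rpair, rpair_sub_left, cpair_eq_rpair]
      have hw : rpair u w = rpair (wGrad ψ z₀) u := by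
        rw [rpair_comm, hz₀, Ginv_right hsm hδ hconv]
      rw [hw]
      ring
    rw [h6]
    linarith
  obtain ⟨c, hc, heq⟩ := exists_hasDerivAt_eq_slope φ φ' (by norm_num : (0:ℝ) < 1)
    (fun x _ => (hder x).continuousAt.continuousWithinAt) (fun x _ => hder x)
  have h0 : φ 0 = cpair z₀ w - ψ z₀ := by simp [hφ]
  have h1 : φ 1 = cpair z w - ψ z := by
    rw [hφ]
    norm_num [hu]
  have hle : φ 1 - φ 0 ≤ 0 := by
    have : φ 1 - φ 0 = φ' c := by rw [heq]; ring
    rw [this]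
    exact hneg c hc.1
  rw [h0, h1] at hle
  linarith

lemma cLeg_eq (hsm : ContDiff ℝ (⊤ : ℕ∞) ψ) (hδ : 0 < δ)
    (hconv : ∀ z v, δ * ‖v‖ ^ 2 ≤ fderiv ℝ (fderiv ℝ ψ) z v v)
    (w : EuclideanSpace ℂ (Fin n)) :
    cLeg ψ w = ((cpair (Ginv ψ w) w - ψ (Ginv ψ w) : ℝ) : EReal) := by
  apply le_antisymm
  · exact iSup_le fun z => EReal.coe_le_coe_iff.mpr (legendre_le hsm hδ hconv w z)
  · exact le_iSup (fun z : EuclideanSpace ℂ (Fin n) => ((cpair z w - ψ z : ℝ) : EReal)) (Ginv ψ w)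

end Leg

section HFun
variable {ψ : EuclideanSpace ℂ (Fin n) → ℝ} {δ : ℝ}

lemma cpair_eq_inner (z w : EuclideanSpace ℂ (Fin n)) :
    cpair z w = 2 * (inner (𝕜 := ℂ) w z).re := by
  rw [cpair_eq_rpair, rpair_eq_inner]

lemma hfun_contDiff (hsm : ContDiff ℝ (⊤ : ℕ∞) ψ) (hδ : 0 < δ)
    (hconv : ∀ z v, δ * ‖v‖ ^ 2 ≤ fderiv ℝ (fderiv ℝ ψ) z v v) :
    ContDiff ℝ (⊤ : ℕ∞) (fun w => cpair (Ginv ψ w) w - ψ (Ginv ψ w)) := by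
  have hG := Ginv_contDiff hsm hδ hconv
  have h1 : ContDiff ℝ (⊤ : ℕ∞) (fun w : EuclideanSpace ℂ (Fin n) =>
      (inner (𝕜 := ℂ) w (Ginv ψ w) : ℂ)) := ContDiff.inner ℂ contDiff_id hG
  have h2 : ContDiff ℝ (⊤ : ℕ∞) (fun w : EuclideanSpace ℂ (Fin n) =>
      (inner (𝕜 := ℂ) w (Ginv ψ w) : ℂ).re) := Complex.reCLM.contDiff.comp h1
  have h3 : ContDiff ℝ (⊤ : ℕ∞) (fun w : EuclideanSpace ℂ (Fin n) => ψ (Ginv ψ w)) := hsm.comp hG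
  have h4 := ((contDiff_const (c := (2:ℝ))).mul h2).sub h3
  have heq : (fun w => cpair (Ginv ψ w) w - ψ (Ginv ψ w))
      = fun w : EuclideanSpace ℂ (Fin n) =>
        2 * (inner (𝕜 := ℂ) w (Ginv ψ w) : ℂ).re - ψ (Ginv ψ w) := by
    funext w
    rw [cpair_eq_inner]
  rw [heq]
  exact h4

lemma fderiv_hfun_apply (hsm : ContDiff ℝ (⊤ : ℕ∞) ψ) (hδ : 0 < δ)
    (hconv : ∀ z v, δ * ‖v‖ ^ 2 ≤ fderiv ℝ (fderiv ℝ ψ) z v v)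
    (w u : EuclideanSpace ℂ (Fin n)) :
    fderiv ℝ (fun w => cpair (Ginv ψ w) w - ψ (Ginv ψ w)) w u
      = 2 * rpair (Ginv ψ w) u := by
  have hG := Ginv_contDiff hsm hδ hconv
  have hG' : HasFDerivAt (Ginv ψ) (fderiv ℝ (Ginv ψ) w) w :=
    ((hG.differentiable (by simp)) w).hasFDerivAt
  set B := fderiv ℝ (Ginv ψ) w with hB
  have hid : HasFDerivAt (fun w : EuclideanSpace ℂ (Fin n) => w)
      (ContinuousLinearMap.id ℝ _) w := hasFDerivAt_id w
  have hin : HasFDerivAt (fun w : EuclideanSpace ℂ (Fin n) => (inner (𝕜 := ℂ) w (Ginv ψ w) : ℂ))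
      ((fderivInnerCLM ℂ (w, Ginv ψ w)).comp ((ContinuousLinearMap.id ℝ _).prod B)) w :=
    HasFDerivAt.inner ℂ hid hG'
  have hre : HasFDerivAt (fun w : EuclideanSpace ℂ (Fin n) =>
        (inner (𝕜 := ℂ) w (Ginv ψ w) : ℂ).re)
      (Complex.reCLM.comp ((fderivInnerCLM ℂ (w, Ginv ψ w)).comp
        ((ContinuousLinearMap.id ℝ _).prod B))) w :=
    (Complex.reCLM.hasFDerivAt).comp w hin
  have hψ' : HasFDerivAt (fun w : EuclideanSpace ℂ (Fin n) => ψ (Ginv ψ w))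
      ((fderiv ℝ ψ (Ginv ψ w)).comp B) w :=
    ((hsm.differentiable (by simp) _).hasFDerivAt).comp w hG'
  have hh : HasFDerivAt (fun w => cpair (Ginv ψ w) w - ψ (Ginv ψ w))
      ((2 : ℝ) • (Complex.reCLM.comp ((fderivInnerCLM ℂ (w, Ginv ψ w)).comp
        ((ContinuousLinearMap.id ℝ _).prod B))) - (fderiv ℝ ψ (Ginv ψ w)).comp B) w := by
    have := (hre.const_mul (2:ℝ)).sub hψ'
    refine this.congr_of_eventuallyEq (Filter.Eventually.of_forall fun x => ?_)
    show cpair (Ginv ψ x) x - ψ (Ginv ψ x)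
        = (2:ℝ) * (inner (𝕜 := ℂ) x (Ginv ψ x) : ℂ).re - ψ (Ginv ψ x)
    rw [cpair_eq_inner]
  rw [hh.fderiv]
  have happ : ((2 : ℝ) • (Complex.reCLM.comp ((fderivInnerCLM ℂ (w, Ginv ψ w)).comp
        ((ContinuousLinearMap.id ℝ _).prod B))) - (fderiv ℝ ψ (Ginv ψ w)).comp B) u
      = 2 * ((inner (𝕜 := ℂ) w (B u) : ℂ) + (inner (𝕜 := ℂ) u (Ginv ψ w) : ℂ)).re
        - fderiv ℝ ψ (Ginv ψ w) (B u) := by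
    simp [fderivInnerCLM_apply]
  rw [happ]
  have hfd : fderiv ℝ ψ (Ginv ψ w) (B u) = 2 * rpair (wGrad ψ (Ginv ψ w)) (B u) :=
    fderiv_eq_rpair ψ _ _
  rw [hfd, Ginv_right hsm hδ hconv]
  have hre1 : ((inner (𝕜 := ℂ) w (B u) : ℂ) + (inner (𝕜 := ℂ) u (Ginv ψ w) : ℂ)).re
      = rpair (B u) w + rpair (Ginv ψ w) u := by
    rw [Complex.add_re, rpair_eq_inner, rpair_eq_inner]
  rw [hre1]
  have : rpair w (B u) = rpair (B u) w := rpair_comm _ _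
  rw [this]
  ring

lemma wGrad_hfun (hsm : ContDiff ℝ (⊤ : ℕ∞) ψ) (hδ : 0 < δ)
    (hconv : ∀ z v, δ * ‖v‖ ^ 2 ≤ fderiv ℝ (fderiv ℝ ψ) z v v)
    (w : EuclideanSpace ℂ (Fin n)) :
    wGrad (fun w => cpair (Ginv ψ w) w - ψ (Ginv ψ w)) w = Ginv ψ w := by
  apply rpair_eq_of_forall
  intro u
  have h1 := fderiv_eq_rpair (fun w => cpair (Ginv ψ w) w - ψ (Ginv ψ w)) w u
  rw [fderiv_hfun_apply hsm hδ hconv] at h1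
  linarith

end HFun

end LempertAux

open LempertAux in
/-- Lempert: for C^∞ strongly convex ψ : ℂⁿ → ℝ, ψ̂ is real-valued and C^∞,
and g_ψ^*(i∂∂̄ψ̂) = i∂∂̄ψ, i.e. ω_{ψ̂}(g_ψ(z))(Dg_ψ(z)v, Dg_ψ(z)t) = ω_ψ(z)(v,t). -/
theorem complex_legendre_pullback_form (n : ℕ) (hn : 1 ≤ n)
    (ψ : EuclideanSpace ℂ (Fin n) → ℝ) (hsm : ContDiff ℝ (⊤ : ℕ∞) ψ)
    (δ : ℝ) (hδ : 0 < δ)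
    (hconv : ∀ z v : EuclideanSpace ℂ (Fin n),
      δ * ‖v‖ ^ 2 ≤ fderiv ℝ (fderiv ℝ ψ) z v v) :
    ∃ h : EuclideanSpace ℂ (Fin n) → ℝ,
      (∀ w, cLeg ψ w = (h w : EReal)) ∧
      ContDiff ℝ (⊤ : ℕ∞) h ∧
      ∀ z v t : EuclideanSpace ℂ (Fin n),
        omegaF h (wGrad ψ z) (fderiv ℝ (wGrad ψ) z v) (fderiv ℝ (wGrad ψ) z t)
          = omegaF ψ z v t := by
  classical
  refine ⟨fun w => cpair (Ginv ψ w) w - ψ (Ginv ψ w),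
    fun w => cLeg_eq hsm hδ hconv w, hfun_contDiff hsm hδ hconv, ?_⟩
  intro z v t
  set h : EuclideanSpace ℂ (Fin n) → ℝ :=
    fun w => cpair (Ginv ψ w) w - ψ (Ginv ψ w) with hh
  have hhsm : ContDiff ℝ (⊤ : ℕ∞) h := hfun_contDiff hsm hδ hconv
  set A := fderiv ℝ (wGrad ψ) z with hA
  set B := fderiv ℝ (wGrad h) (wGrad ψ z) with hBdef
  have hsymmψ : ∀ a b, D2 ψ z a b = D2 ψ z b a := fun a b =>
    (hsm.contDiffAt.isSymmSndFDerivAt (by simp; exact WithTop.coe_le_coe.mpr le_top)).eq a b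
  have hsymmh : ∀ a b, D2 h (wGrad ψ z) a b = D2 h (wGrad ψ z) b a := fun a b =>
    (hhsm.contDiffAt.isSymmSndFDerivAt (by simp; exact WithTop.coe_le_coe.mpr le_top)).eq a b
  have hGg : ∀ y, wGrad h (wGrad ψ y) = y := by
    intro y
    rw [hh]
    rw [wGrad_hfun hsm hδ hconv, Ginv_left hsm hδ hconv]
  have hAh : HasFDerivAt (wGrad ψ) A z :=
    ((contDiff_wGrad hsm).differentiable (by simp) z).hasFDerivAt
  have hBh : HasFDerivAt (wGrad h) B (wGrad ψ z) :=
    ((contDiff_wGrad hhsm).differentiable (by simp) _).hasFDerivAt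
  have hcomp : HasFDerivAt (wGrad h ∘ wGrad ψ) (B.comp A) z := hBh.comp z hAh
  have hidf : (wGrad h ∘ wGrad ψ) = id := funext hGg
  rw [hidf] at hcomp
  have hBA' : B.comp A = ContinuousLinearMap.id ℝ _ := hcomp.unique (hasFDerivAt_id z)
  have hBA : ∀ x, B (A x) = x := fun x => by
    have := congrArg (fun (L : EuclideanSpace ℂ (Fin n) →L[ℝ] EuclideanSpace ℂ (Fin n)) => L x)
      hBA'
    simpa using this
  have hAsym : ∀ x y, rpair (A x) y = rpair (A y) x := by
    intro x y
    rw [hA, rpair_fderiv_wGrad hsm, rpair_fderiv_wGrad hsm, hsymmψ]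
  have hBsym : ∀ x y, rpair (B x) y = rpair (B y) x := by
    intro x y
    rw [hBdef, rpair_fderiv_wGrad hhsm, rpair_fderiv_wGrad hhsm, hsymmh]
  have e1 : ∀ x y, D2 h (wGrad ψ z) x y = 2 * rpair (B x) y := by
    intro x y
    have := rpair_fderiv_wGrad hhsm (wGrad ψ z) x y
    rw [hBdef]
    linarith
  have e2 : ∀ x y, D2 ψ z x y = 2 * rpair (A x) y := by
    intro x y
    have := rpair_fderiv_wGrad hsm z x y
    rw [hA]
    linarith
  rw [omega_rep h (wGrad ψ z) hsymmh (A v) (A t), omega_rep ψ z hsymmψ v t,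
    Complex.ofReal_inj]
  simp only [e1, e2]
  have t1 : rpair (B (Complex.I • A v)) (A t) = - rpair (A (Complex.I • t)) v := by
    calc rpair (B (Complex.I • A v)) (A t)
        = rpair (B (A t)) (Complex.I • A v) := hBsym _ _
      _ = rpair t (Complex.I • A v) := by rw [hBA]
      _ = rpair (Complex.I • A v) t := rpair_comm _ _
      _ = - rpair (A v) (Complex.I • t) := rpair_smul_I_left _ _
      _ = - rpair (A (Complex.I • t)) v := by rw [hAsym]
  have t2 : rpair (B (Complex.I • A t)) (A v) = - rpair (A (Complex.I • v)) t := by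
    calc rpair (B (Complex.I • A t)) (A v)
        = rpair (B (A v)) (Complex.I • A t) := hBsym _ _
      _ = rpair v (Complex.I • A t) := by rw [hBA]
      _ = rpair (Complex.I • A t) v := rpair_comm _ _
      _ = - rpair (A t) (Complex.I • v) := rpair_smul_I_left _ _
      _ = - rpair (A (Complex.I • v)) t := by rw [hAsym]
  rw [t1, t2]
  ring
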